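/- Let Y_1,...,Y_n be real numbers with n ≥ 2 and min_i(Y_i − Ȳ_n) < 0. Then the integral over θ ∈ ℝ and σ ∈ (0,∞) of σ^{-(n+1)} Π_{i=1}^n [e^{−(Y_i−θ)/σ} / (1 + e^{−(Y_i−θ)/σ})²] dθ dσ is finite. (Propriety of the posterior for the Logistic(θ,σ) model under the improper prior π(θ,σ) = 1/σ.) -/

import Mathlib

/-!
The logistic kernel `g x = eˣ / (1 + eˣ)²` is at most `1` and at most `e^{-|x|}`. Pick `a`, `b` with
`Y a < Ȳ ≤ Y b`; keeping only the factors at `a` and `b` bounds the likelihood by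
`exp (-(d / 2 + |θ - m|) / σ)`, where `d = |Y b - Y a| > 0` and `m` is the midpoint of `Y a`, `Y b`.
Integrating out `θ` leaves `2 σ^{-n} e^{-d/(2σ)}`, which the substitution `σ = 1 / t` turns into the
Gamma-type integrand `t^{n-2} e^{-d t / 2}`, integrable because `n ≥ 2`.
-/

open MeasureTheory Real Set Finset

/-- The factor `e^{-(Y-θ)/σ} / (1 + e^{-(Y-θ)/σ})²` of the likelihood is, definitionally,
`logisticKernel (-(Y - θ) / σ)`. -/
noncomputable def logisticKernel (x : ℝ) : ℝ := exp x / (1 + exp x) ^ 2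

lemma logisticKernel_nonneg (x : ℝ) : 0 ≤ logisticKernel x := by
  unfold logisticKernel
  positivity

lemma logisticKernel_le_one (x : ℝ) : logisticKernel x ≤ 1 := by
  unfold logisticKernel
  rw [div_le_one (by positivity)]
  nlinarith [exp_pos x]

lemma logisticKernel_neg (x : ℝ) : logisticKernel (-x) = logisticKernel x := by
  unfold logisticKernel
  rw [exp_neg]
  field_simp
  ring

lemma logisticKernel_le_exp_neg_abs (x : ℝ) : logisticKernel x ≤ exp (-|x|) := by
  wlog hx : x ≤ 0 generalizing x
  · simpa only [logisticKernel_neg, abs_neg] using this (-x) (by linarith)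
  rw [abs_of_nonpos hx, neg_neg]
  exact div_le_self (exp_pos x).le (by nlinarith [exp_pos x])

lemma prod_logisticKernel_le {ι : Type*} [Fintype ι] (x : ι → ℝ) {a b : ι} (hab : a ≠ b) :
    ∏ i, logisticKernel (x i) ≤ exp (-(|x a| + |x b|)) := by
  classical
  calc ∏ i, logisticKernel (x i)
      = (∏ i ∈ univ \ {a, b}, logisticKernel (x i))
          * (logisticKernel (x a) * logisticKernel (x b)) := by
        rw [← prod_sdiff (subset_univ {a, b}), prod_pair hab]
    _ ≤ 1 * (exp (-|x a|) * exp (-|x b|)) := by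
        have h₀ := logisticKernel_nonneg
        refine mul_le_mul (prod_le_one (fun i _ => h₀ _) fun i _ => logisticKernel_le_one _)
          (mul_le_mul ?_ ?_ (h₀ _) (exp_nonneg _)) (mul_nonneg (h₀ _) (h₀ _)) zero_le_one
        all_goals exact logisticKernel_le_exp_neg_abs _
    _ = exp (-(|x a| + |x b|)) := by rw [one_mul, ← exp_add, neg_add]

lemma abs_sub_div_two_add_abs_sub_midpoint_le (u v θ : ℝ) :
    |v - u| / 2 + |θ - (u + v) / 2| ≤ |u - θ| + |v - θ| := by
  rcases abs_cases (v - u) with h₁ | h₁ <;> rcases abs_cases (θ - (u + v) / 2) with h₂ | h₂ <;>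
    rcases abs_cases (u - θ) with h₃ | h₃ <;> rcases abs_cases (v - θ) with h₄ | h₄ <;> linarith

lemma prod_logisticKernel_div_le {ι : Type*} [Fintype ι] (Y : ι → ℝ) {a b : ι} (hab : a ≠ b)
    (θ : ℝ) {σ : ℝ} (hσ : 0 < σ) :
    ∏ i, logisticKernel (-(Y i - θ) / σ)
      ≤ exp (-(|Y b - Y a| / 2 + |θ - (Y a + Y b) / 2|) / σ) := by
  refine (prod_logisticKernel_le _ hab).trans (exp_le_exp.mpr ?_)
  simp only [abs_div, abs_neg, abs_of_pos hσ]
  rw [neg_div, neg_le_neg_iff, ← add_div]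
  exact div_le_div_of_nonneg_right (abs_sub_div_two_add_abs_sub_midpoint_le _ _ _) hσ.le

lemma integral_exp_neg_abs_sub_div (c : ℝ) {σ : ℝ} (hσ : 0 < σ) :
    ∫ θ, exp (-|θ - c| / σ) = 2 * σ := by
  rw [integral_sub_right_eq_self (fun x => exp (-|x| / σ)) c,
    integral_comp_abs (f := fun x => exp (-x / σ))]
  have h := integral_exp_mul_Ioi (a := -σ⁻¹) (by simpa using hσ) 0
  simp only [mul_zero, exp_zero, neg_mul, ← div_eq_inv_mul, neg_div] at h ⊢
  rw [h]
  field_simp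

lemma integrableOn_rpow_neg_mul_exp_neg_div {s b : ℝ} (hs : 1 < s) (hb : 0 < b) :
    IntegrableOn (fun x => x ^ (-s) * exp (-b / x)) (Ioi (0 : ℝ)) := by
  refine (integrableOn_Ioi_comp_rpow_iff' _ (p := -1) (by norm_num)).mp ?_
  refine (integrableOn_rpow_mul_exp_neg_mul_rpow (s := s - 2) (p := 1) (by linarith) one_pos
    hb).congr_fun (fun x (hx : 0 < x) => ?_) measurableSet_Ioi
  simp only [smul_eq_mul, rpow_one, rpow_neg_one, inv_rpow hx.le, div_inv_eq_mul, ← rpow_neg hx.le,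
    neg_neg, neg_mul]
  rw [← mul_assoc, ← rpow_add hx]
  ring_nf

lemma integrableOn_rpow_mul_exp_neg_add_abs_div {s b : ℝ} (hs : 1 < s) (hb : 0 < b) (c : ℝ) :
    IntegrableOn (fun p : ℝ × ℝ => p.2 ^ (-(s + 1)) * exp (-(b + |p.1 - c|) / p.2))
      (univ ×ˢ Ioi (0 : ℝ)) := by
  have hmeas : Measurable fun p : ℝ × ℝ => p.2 ^ (-(s + 1)) * exp (-(b + |p.1 - c|) / p.2) := by
    fun_prop
  rw [IntegrableOn, Measure.volume_eq_prod, ← Measure.prod_restrict, Measure.restrict_univ,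
    integrable_prod_iff' hmeas.aestronglyMeasurable]
  have hsplit : ∀ θ σ : ℝ, σ ^ (-(s + 1)) * exp (-(b + |θ - c|) / σ)
      = σ ^ (-(s + 1)) * exp (-b / σ) * exp (-|θ - c| / σ) := by
    intro θ σ
    rw [mul_assoc, ← exp_add]
    ring_nf
  have hinner : ∀ σ ∈ Set.Ioi (0 : ℝ), ∫ θ, ‖σ ^ (-(s + 1)) * exp (-(b + |θ - c|) / σ)‖
      = 2 * (σ ^ (-s) * exp (-b / σ)) := by
    intro σ (hσ : 0 < σ)
    have hnn : ∀ θ, 0 ≤ σ ^ (-(s + 1)) * exp (-(b + |θ - c|) / σ) := fun θ => by positivity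
    simp_rw [norm_of_nonneg (hnn _), hsplit, integral_const_mul,
      integral_exp_neg_abs_sub_div c hσ, neg_add, rpow_add hσ, rpow_neg_one]
    field_simp
  constructor
  · filter_upwards [ae_restrict_mem measurableSet_Ioi] with σ (hσ : 0 < σ)
    simp_rw [hsplit]
    refine (Integrable.of_integral_ne_zero ?_).const_mul _
    rw [integral_exp_neg_abs_sub_div c hσ]
    positivity
  · exact IntegrableOn.congr_fun ((integrableOn_rpow_neg_mul_exp_neg_div hs hb).const_mul 2)
      (fun σ hσ => (hinner σ hσ).symm) measurableSet_Ioi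

/-- Propriety of the posterior for the Logistic `(θ,σ)` model under the
improper prior `π(θ,σ) = 1/σ`: if `n ≥ 2` and `minᵢ(Yᵢ − Ȳ) < 0`, then
`∫∫ σ^{-(n+1)} Π e^{−(Yᵢ−θ)/σ}/(1+e^{−(Yᵢ−θ)/σ})² dθ dσ < ∞`. -/
theorem stmt_6 (n : ℕ) (hn : 2 ≤ n) (Y : Fin n → ℝ)
    (hY : ∃ i, Y i - (∑ j, Y j) / n < 0) :
    IntegrableOn
      (fun p : ℝ × ℝ =>
        p.2 ^ (-((n : ℝ) + 1))
          * ∏ i, Real.exp (-(Y i - p.1) / p.2)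
              / (1 + Real.exp (-(Y i - p.1) / p.2)) ^ 2)
      (Set.univ ×ˢ Ioi (0 : ℝ)) volume := by
  obtain ⟨a, ha⟩ := hY
  have hmean : ∑ _j : Fin n, (∑ j, Y j) / n = ∑ j, Y j := by
    rw [sum_const, card_univ, Fintype.card_fin, nsmul_eq_mul]
    field_simp
  obtain ⟨b, -, hb⟩ := exists_le_of_sum_le ⟨a, mem_univ a⟩ hmean.le
  have hYab : Y a ≠ Y b := by linarith
  have hab : a ≠ b := fun h => hYab (congrArg Y h)
  have hd : 0 < |Y b - Y a| / 2 := by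
    have := abs_pos.mpr (sub_ne_zero.mpr hYab.symm)
    positivity
  refine (integrableOn_rpow_mul_exp_neg_add_abs_div (s := n) (by exact_mod_cast (hn : 1 < n)) hd
    ((Y a + Y b) / 2)).mono' (Measurable.aestronglyMeasurable (by fun_prop)) ?_
  filter_upwards [ae_restrict_mem (MeasurableSet.univ.prod measurableSet_Ioi)] with ⟨θ, σ⟩ hp
  have hσ : 0 < σ := hp.2
  rw [norm_of_nonneg (by positivity)]
  exact mul_le_mul_of_nonneg_left (prod_logisticKernel_div_le Y hab θ hσ) (by positivity)
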